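/- With E(N, a₁, a₂) as the twist-untwist empirical error formula, if a_j = c_j/√N with c₂ ≠ −c₁ (both nonzero, c₁ < 0), then N²·E(N, c₁/√N, c₂/√N) → ∞ as N → ∞. -/

import Mathlib

open Real Filter

/-- Empirical (method-of-moments) error at φ = 0 of the generalized protocol. -/
noncomputable def E (N : ℕ) (a₁ a₂ : ℝ) : ℝ :=
  (2 * ((N : ℝ) + 1) - 2 * ((N : ℝ) - 1) * Real.cos (2 * (a₁ + a₂)) ^ (N - 2)) /
    ((N : ℝ) * ((N : ℝ) - 1) ^ 2 * Real.sin a₂ ^ 2 *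
      (Real.cos a₂ ^ (N - 2) + Real.cos (2 * a₁ + a₂) ^ (N - 2)) ^ 2)

/-! Along a_j = c_j/√N one has cos(c/√N)^(N-2) → exp(-c²/2) and N·sin²(c₂/√N) → c₂². Hence the
numerator of E grows like 2N(1 - exp(-2(c₁+c₂)²)), which is of exact order N because c₁ + c₂ ≠ 0,
while the denominator grows like N²·c₂²(exp(-c₂²/2) + exp(-(2c₁+c₂)²/2))². So N·E tends to a
positive constant, and N²·E → ∞. -/

open Topology

theorem natCast_mul_div_sqrt_sq {N : ℕ} (hN : N ≠ 0) (t : ℝ) :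
    (N : ℝ) * (t / √N) ^ 2 = t ^ 2 := by
  rw [div_pow, Real.sq_sqrt (Nat.cast_nonneg N)]
  field_simp

theorem tendsto_div_sqrt_natCast (t : ℝ) : Tendsto (fun N : ℕ => t / √N) atTop (𝓝 0) :=
  tendsto_const_nhds.div_atTop (tendsto_sqrt_atTop.comp tendsto_natCast_atTop_atTop)

theorem tendsto_natCast_mul_sin_div_sqrt_sq (t : ℝ) :
    Tendsto (fun N : ℕ => (N : ℝ) * sin (t / √N) ^ 2) atTop (𝓝 (t ^ 2)) := by
  have hsinc :=
    (((continuous_sinc.tendsto 0).comp (tendsto_div_sqrt_natCast t)).pow 2).const_mul (t ^ 2)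
  rw [sinc_zero, one_pow, mul_one] at hsinc
  refine hsinc.congr' ?_
  filter_upwards [eventually_ne_atTop 0] with N hN
  rcases eq_or_ne t 0 with rfl | ht
  · simp
  have hx : t / √N ≠ 0 := div_ne_zero ht (by positivity)
  rw [Function.comp_apply, sinc_of_ne_zero hx, ← natCast_mul_div_sqrt_sq hN t]
  field_simp

theorem tendsto_natCast_mul_cos_div_sqrt_sub_one (t : ℝ) :
    Tendsto (fun N : ℕ => (N : ℝ) * (cos (t / √N) - 1)) atTop (𝓝 (-(t ^ 2 / 2))) := by
  have half_angle (x : ℝ) : cos (2 * x) - 1 = -2 * sin x ^ 2 := by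
    rw [cos_two_mul, cos_sq']; ring
  convert (tendsto_natCast_mul_sin_div_sqrt_sq (t / 2)).const_mul (-2) using 2 with N
  · rw [show t / √N = 2 * (t / 2 / √N) by ring, half_angle]; ring
  · ring

theorem tendsto_cos_div_sqrt_pow (t : ℝ) :
    Tendsto (fun N : ℕ => cos (t / √N) ^ N) atTop (𝓝 (exp (-(t ^ 2 / 2)))) := by
  simpa using tendsto_one_add_pow_exp_of_tendsto (tendsto_natCast_mul_cos_div_sqrt_sub_one t)

theorem tendsto_cos_div_sqrt_pow_sub (t : ℝ) (k : ℕ) :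
    Tendsto (fun N : ℕ => cos (t / √N) ^ (N - k)) atTop (𝓝 (exp (-(t ^ 2 / 2)))) := by
  have hcos : Tendsto (fun N : ℕ => cos (t / √N)) atTop (𝓝 1) := by
    simpa [Function.comp_def] using (continuous_cos.tendsto 0).comp (tendsto_div_sqrt_natCast t)
  have hquot := (tendsto_cos_div_sqrt_pow t).mul ((hcos.pow k).inv₀ (by simp))
  rw [one_pow, inv_one, mul_one] at hquot
  refine hquot.congr' ?_
  filter_upwards [eventually_ge_atTop k, hcos.eventually_ne one_ne_zero] with N hk hne
  exact (pow_sub₀ _ hne hk).symm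

theorem tendsto_natCast_add_div_self (a : ℝ) :
    Tendsto (fun N : ℕ => ((N : ℝ) + a) / N) atTop (𝓝 1) := by
  have h := (tendsto_const_div_atTop_nhds_zero_nat a).const_add (1 : ℝ)
  rw [add_zero] at h
  refine h.congr' ?_
  filter_upwards [eventually_ne_atTop 0] with N hN
  field_simp

theorem natCast_mul_E {N : ℕ} (hN : N ≠ 0) (a₁ a₂ : ℝ) :
    N * E N a₁ a₂ =
      ((2 * ((N : ℝ) + 1) - 2 * ((N : ℝ) - 1) * cos (2 * (a₁ + a₂)) ^ (N - 2)) / N) /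
        ((((N : ℝ) - 1) / N) ^ 2 * (N * sin a₂ ^ 2) *
          (cos a₂ ^ (N - 2) + cos (2 * a₁ + a₂) ^ (N - 2)) ^ 2) := by
  have hN' : (N : ℝ) ≠ 0 := Nat.cast_ne_zero.mpr hN
  rw [E]
  generalize 2 * ((N : ℝ) + 1) - 2 * ((N : ℝ) - 1) * cos (2 * (a₁ + a₂)) ^ (N - 2) = n
  generalize cos a₂ ^ (N - 2) + cos (2 * a₁ + a₂) ^ (N - 2) = K
  have hden : (((N : ℝ) - 1) / N) ^ 2 * (N * sin a₂ ^ 2) * K ^ 2 =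
      ((N - 1) ^ 2 * sin a₂ ^ 2 * K ^ 2) / N := by
    field_simp
  rw [hden, div_div_div_cancel_right₀ hN', mul_div_assoc', ← mul_div_mul_left n _ hN']
  ring

theorem tendsto_natCast_mul_E (c₁ c₂ : ℝ) (hc₂ : c₂ ≠ 0) :
    Tendsto (fun N : ℕ => (N : ℝ) * E N (c₁ / √N) (c₂ / √N)) atTop
      (𝓝 ((2 - 2 * exp (-((2 * (c₁ + c₂)) ^ 2 / 2))) /
        (c₂ ^ 2 * (exp (-(c₂ ^ 2 / 2)) + exp (-((2 * c₁ + c₂) ^ 2 / 2))) ^ 2))) := by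
  have hnum := ((tendsto_natCast_add_div_self 1).const_mul 2).sub
    (((tendsto_natCast_add_div_self (-1)).const_mul 2).mul
      (tendsto_cos_div_sqrt_pow_sub (2 * (c₁ + c₂)) 2))
  have hden := (((tendsto_natCast_add_div_self (-1)).pow 2).mul
    (tendsto_natCast_mul_sin_div_sqrt_sq c₂)).mul
      (((tendsto_cos_div_sqrt_pow_sub c₂ 2).add
        (tendsto_cos_div_sqrt_pow_sub (2 * c₁ + c₂) 2)).pow 2)
  rw [mul_one] at hnum
  rw [one_pow, one_mul] at hden
  refine (hnum.div hden (by positivity)).congr' ?_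
  filter_upwards [eventually_ne_atTop 0] with N hN
  have harg₁ : 2 * (c₁ / √N + c₂ / √N) = 2 * (c₁ + c₂) / √N := by ring
  have harg₂ : 2 * (c₁ / √N) + c₂ / √N = (2 * c₁ + c₂) / √N := by ring
  rw [Pi.div_apply, natCast_mul_E hN, harg₁, harg₂, ← sub_eq_add_neg]
  congr 1
  ring

theorem stmt_9_general (c₁ c₂ : ℝ) (hc₂ : c₂ ≠ 0) (hne : c₂ ≠ -c₁) :
    Tendsto (fun N : ℕ =>
        (N : ℝ) ^ 2 * E N (c₁ / Real.sqrt (N : ℝ)) (c₂ / Real.sqrt (N : ℝ)))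
      atTop atTop := by
  have hsum : 2 * (c₁ + c₂) ≠ 0 := fun h => hne (by linarith)
  have hnum : 0 < 2 - 2 * exp (-((2 * (c₁ + c₂)) ^ 2 / 2)) := by
    have : exp (-((2 * (c₁ + c₂)) ^ 2 / 2)) < 1 := by
      rw [exp_lt_one_iff, neg_lt_zero]
      positivity
    linarith
  refine (tendsto_natCast_atTop_atTop.atTop_mul_pos (div_pos hnum (by positivity))
    (tendsto_natCast_mul_E c₁ c₂ hc₂)).congr fun N => ?_
  ring

/-- If a_j = c_j/√N with c₁ < 0, c₂ ≠ 0 and c₂ ≠ −c₁, then N²·E(N, a₁, a₂) → ∞. -/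
theorem stmt_9 (c₁ c₂ : ℝ) (hc₁ : c₁ < 0) (hc₂ : c₂ ≠ 0) (hne : c₂ ≠ -c₁) :
    Tendsto (fun N : ℕ =>
        (N : ℝ) ^ 2 * E N (c₁ / Real.sqrt (N : ℝ)) (c₂ / Real.sqrt (N : ℝ)))
      atTop atTop :=
  stmt_9_general c₁ c₂ hc₂ hne
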